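/- arXiv:2604.24745 — 3 statements merged into one kernel-verified Lean document; each statement's English description precedes it below -/
import Mathlib

section
/- Let g₁, ..., g_m be nonzero vectors in R^D, g_u a unit vector, and suppose each rotated vector g_i^rot satisfies ||g_i^rot|| = ||g_i||, (g_i^rot/||g_i||)·g_u = S_c > 0, and ||g_i^rot - g_i|| ≤ 2||g_i||·sin(α_max/2) with α_max satisfying 2sin(α_max/2) < S_c. Then Σ_i g_i·g_u ≥ (S_c - 2sin(α_max/2))·Σ_i ||g_i|| > 0. -/
open RealInnerProductSpace

theorem stmt_14 (D m : ℕ) (hm : 0 < m)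
    (g grot : Fin m → EuclideanSpace ℝ (Fin D)) (hg : ∀ i, g i ≠ 0)
    (gu : EuclideanSpace ℝ (Fin D)) (hgu : ‖gu‖ = 1)
    (Sc αmax : ℝ) (hSc : 0 < Sc)
    (hisom : ∀ i, ‖grot i‖ = ‖g i‖)
    (hcos : ∀ i, ⟪‖g i‖⁻¹ • grot i, gu⟫ = Sc)
    (hchord : ∀ i, ‖grot i - g i‖ ≤ 2 * ‖g i‖ * Real.sin (αmax / 2))
    (hαmax : 2 * Real.sin (αmax / 2) < Sc) :
    (Sc - 2 * Real.sin (αmax / 2)) * ∑ i, ‖g i‖ ≤ ∑ i, ⟪g i, gu⟫ ∧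
    0 < (Sc - 2 * Real.sin (αmax / 2)) * ∑ i, ‖g i‖ := by
  have key : ∀ i, (Sc - 2 * Real.sin (αmax / 2)) * ‖g i‖ ≤ ⟪g i, gu⟫ := by
    intro i
    have hni : (0:ℝ) < ‖g i‖ := norm_pos_iff.mpr (hg i)
    have hrot : ⟪grot i, gu⟫ = Sc * ‖g i‖ := by
      have h := hcos i
      rw [real_inner_smul_left] at h
      have := (inv_mul_eq_iff_eq_mul₀ hni.ne').mp h
      linarith [this]
    have hdiff : |⟪grot i - g i, gu⟫| ≤ 2 * ‖g i‖ * Real.sin (αmax / 2) := by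
      calc |⟪grot i - g i, gu⟫| ≤ ‖grot i - g i‖ * ‖gu‖ := abs_real_inner_le_norm _ _
        _ = ‖grot i - g i‖ := by rw [hgu, mul_one]
        _ ≤ _ := hchord i
    have hsub : ⟪grot i - g i, gu⟫ = ⟪grot i, gu⟫ - ⟪g i, gu⟫ := inner_sub_left _ _ _
    have h1 : ⟪grot i, gu⟫ - ⟪g i, gu⟫ ≤ 2 * ‖g i‖ * Real.sin (αmax / 2) := by
      rw [← hsub]; exact le_of_abs_le hdiff
    nlinarith [h1, hrot]
  constructor
  · calc (Sc - 2 * Real.sin (αmax / 2)) * ∑ i, ‖g i‖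
        = ∑ i, (Sc - 2 * Real.sin (αmax / 2)) * ‖g i‖ := Finset.mul_sum _ _ _
      _ ≤ ∑ i, ⟪g i, gu⟫ := Finset.sum_le_sum fun i _ => key i
  · apply mul_pos (by linarith)
    apply Finset.sum_pos (fun i _ => norm_pos_iff.mpr (hg i))
    exact Finset.univ_nonempty_iff.mpr (Fin.pos_iff_nonempty.mp hm)
end

section
/- Let g₁, g₂ be nonzero vectors in R^D with g₁·g₂ < 0 and cosine similarity S = (g₁·g₂)/(||g₁||·||g₂||), S ≠ -1. Define ĝ₁ = g₁ - ((g₁·g₂)/||g₂||²)g₂ and ĝ₂ = g₂ - ((g₁·g₂)/||g₁||²)g₁, and g_PC = ĝ₁ + ĝ₂. Then g_PC·g₁ = ||g₁||²(1 - S²) ≥ 0 and g_PC·g₂ = ||g₂||²(1 - S²) ≥ 0; moreover g_PC·(g₁/||g₁||) / (g_PC·(g₂/||g₂||)) = ||g₁||/||g₂||. -/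
open RealInnerProductSpace

theorem stmt_15 (D : ℕ) (g1 g2 : EuclideanSpace ℝ (Fin D))
    (hg1 : g1 ≠ 0) (hg2 : g2 ≠ 0)
    (hconf : ⟪g1, g2⟫ < 0) (S : ℝ)
    (hS : S = ⟪g1, g2⟫ / (‖g1‖ * ‖g2‖)) (hS' : S ≠ -1)
    (gPC : EuclideanSpace ℝ (Fin D))
    (hgPC : gPC = (g1 - (⟪g1, g2⟫ / ‖g2‖ ^ 2) • g2)
                 + (g2 - (⟪g1, g2⟫ / ‖g1‖ ^ 2) • g1)) :
    ⟪gPC, g1⟫ = ‖g1‖ ^ 2 * (1 - S ^ 2) ∧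
    ⟪gPC, g2⟫ = ‖g2‖ ^ 2 * (1 - S ^ 2) ∧
    0 ≤ ‖g1‖ ^ 2 * (1 - S ^ 2) ∧
    0 ≤ ‖g2‖ ^ 2 * (1 - S ^ 2) ∧
    ⟪gPC, ‖g1‖⁻¹ • g1⟫ / ⟪gPC, ‖g2‖⁻¹ • g2⟫ = ‖g1‖ / ‖g2‖ := by
  set a := ‖g1‖ with ha
  set b := ‖g2‖ with hb
  set c := ⟪g1, g2⟫ with hc
  have ha0 : 0 < a := norm_pos_iff.mpr hg1
  have hb0 : 0 < b := norm_pos_iff.mpr hg2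
  have h11 : ⟪g1, g1⟫ = a ^ 2 := real_inner_self_eq_norm_sq g1
  have h22 : ⟪g2, g2⟫ = b ^ 2 := real_inner_self_eq_norm_sq g2
  have h21 : ⟪g2, g1⟫ = c := real_inner_comm g1 g2
  have hcs : |c| ≤ a * b := abs_real_inner_le_norm g1 g2
  have hcab : -(a*b) ≤ c := neg_le_of_abs_le hcs
  have hSlt : S < 0 := by
    rw [hS]; exact div_neg_of_neg_of_pos hconf (by positivity)
  have hSge : -1 ≤ S := by
    rw [hS]
    rw [le_div_iff₀ (by positivity)]
    linarith
  have hSne : S ≠ 1 := by linarith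
  have h1S2 : 0 < 1 - S ^ 2 := by
    have : -1 < S := lt_of_le_of_ne hSge (Ne.symm hS')
    nlinarith
  have e1 : ⟪gPC, g1⟫ = a ^ 2 * (1 - S ^ 2) := by
    rw [hgPC]
    simp only [inner_add_left, inner_sub_left, real_inner_smul_left, h11, h21, ← hc]
    rw [hS]
    field_simp
    ring
  have e2 : ⟪gPC, g2⟫ = b ^ 2 * (1 - S ^ 2) := by
    rw [hgPC]
    simp only [inner_add_left, inner_sub_left, real_inner_smul_left, h22, h21, ← hc]
    rw [hS]
    field_simp
    ring
  refine ⟨e1, e2, by positivity, by positivity, ?_⟩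
  rw [real_inner_smul_right, real_inner_smul_right, e1, e2]
  field_simp
end

section
/- Let g₁, g₂ be nonzero vectors in R^D with cosine similarity S = (g₁·g₂)/(||g₁||·||g₂||). Define α₁ = ||g₂||/(||g₁||+||g₂||), α₂ = ||g₁||/(||g₁||+||g₂||) and g_IMTL = α₁g₁ + α₂g₂. Then g_IMTL·(g₁/||g₁||) = g_IMTL·(g₂/||g₂||) = (||g₁||·||g₂||/(||g₁||+||g₂||))·(1 + S) ≥ 0 when S ≥ -1, and ||g_IMTL|| = 2·√((1+S)/2)·||g₁||·||g₂||/(||g₁||+||g₂||). -/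
open RealInnerProductSpace

theorem stmt_16 (D : ℕ) (g1 g2 : EuclideanSpace ℝ (Fin D))
    (hg1 : g1 ≠ 0) (hg2 : g2 ≠ 0) (S : ℝ)
    (hS : S = ⟪g1, g2⟫ / (‖g1‖ * ‖g2‖)) (hS' : -1 ≤ S)
    (gIMTL : EuclideanSpace ℝ (Fin D))
    (hgIMTL : gIMTL = (‖g2‖ / (‖g1‖ + ‖g2‖)) • g1
                    + (‖g1‖ / (‖g1‖ + ‖g2‖)) • g2) :
    ⟪gIMTL, ‖g1‖⁻¹ • g1⟫ = (‖g1‖ * ‖g2‖ / (‖g1‖ + ‖g2‖)) * (1 + S) ∧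
    ⟪gIMTL, ‖g2‖⁻¹ • g2⟫ = (‖g1‖ * ‖g2‖ / (‖g1‖ + ‖g2‖)) * (1 + S) ∧
    0 ≤ (‖g1‖ * ‖g2‖ / (‖g1‖ + ‖g2‖)) * (1 + S) ∧
    ‖gIMTL‖ = 2 * Real.sqrt ((1 + S) / 2) * (‖g1‖ * ‖g2‖ / (‖g1‖ + ‖g2‖)) := by
  have ha : (0:ℝ) < ‖g1‖ := norm_pos_iff.mpr hg1
  have hb : (0:ℝ) < ‖g2‖ := norm_pos_iff.mpr hg2
  set a := ‖g1‖
  set b := ‖g2‖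
  have hab : (0:ℝ) < a + b := by linarith
  have hinner : ⟪g1, g2⟫ = S * (a * b) := by
    rw [hS]; field_simp
  have h11 : ⟪g1, g1⟫ = a * a := by
    rw [real_inner_self_eq_norm_mul_norm]
  have h22 : ⟪g2, g2⟫ = b * b := by
    rw [real_inner_self_eq_norm_mul_norm]
  have h21 : ⟪g2, g1⟫ = S * (a * b) := by
    rw [real_inner_comm]; exact hinner
  have e1 : ⟪gIMTL, ‖g1‖⁻¹ • g1⟫ = (a * b / (a + b)) * (1 + S) := by
    rw [hgIMTL]
    simp only [inner_add_left, inner_smul_left, inner_smul_right, h11, h21,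
      RCLike.conj_to_real]
    field_simp
    ring
  have e2 : ⟪gIMTL, ‖g2‖⁻¹ • g2⟫ = (a * b / (a + b)) * (1 + S) := by
    rw [hgIMTL]
    simp only [inner_add_left, inner_smul_left, inner_smul_right, h22, hinner,
      RCLike.conj_to_real]
    field_simp
    ring
  have hnn : 0 ≤ (a * b / (a + b)) * (1 + S) := by
    have : 0 ≤ a * b / (a + b) := by positivity
    nlinarith
  refine ⟨e1, e2, hnn, ?_⟩
  have hsq : ‖gIMTL‖ ^ 2 = (2 * Real.sqrt ((1 + S) / 2) * (a * b / (a + b))) ^ 2 := by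
    have hnorm2 : ‖gIMTL‖ ^ 2 = ⟪gIMTL, gIMTL⟫ := by
      rw [real_inner_self_eq_norm_sq]
    rw [hnorm2, hgIMTL]
    simp only [inner_add_left, inner_add_right, inner_smul_left, inner_smul_right,
      h11, h22, hinner, h21, RCLike.conj_to_real]
    have hsqrt : Real.sqrt ((1 + S) / 2) ^ 2 = (1 + S) / 2 := by
      rw [Real.sq_sqrt]; linarith
    rw [mul_pow, mul_pow, hsqrt]
    field_simp
    ring
  have hrhsnn : 0 ≤ 2 * Real.sqrt ((1 + S) / 2) * (a * b / (a + b)) := by positivity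
  nlinarith [norm_nonneg gIMTL, hsq]
end
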